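/- arXiv:2004.01209 — 2 statements merged into one kernel-verified Lean document; each statement's English description precedes it below -/
import Mathlib

section
/- Let (X,𝒫₁,𝒫₂) be a strongly pairwise regular bispace satisfying condition C(2). If each pairwise open cover of X has a locally finite refinement, then each pairwise open cover 𝒞 of X has a locally finite refinement ℬ such that for every B ∈ ℬ there exists C ∈ 𝒞 with 𝒫₁-cl(B) ∪ 𝒫₂-cl(B) ⊆ C. -/
open Set

variable {X : Type*}

/-- A σ-space structure: contains ∅ and univ, closed under countable unions
and finite (binary) intersections. -/
def IsSigmaStructure (P : Set (Set X)) : Prop :=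
  ∅ ∈ P ∧ Set.univ ∈ P ∧
  (∀ S : Set (Set X), S.Countable → S ⊆ P → ⋃₀ S ∈ P) ∧
  (∀ U ∈ P, ∀ V ∈ P, U ∩ V ∈ P)

/-- The 𝒫-closure of M: intersection of all 𝒫-closed sets containing M. -/
def sCl (P : Set (Set X)) (M : Set X) : Set X :=
  ⋂₀ {F | Fᶜ ∈ P ∧ M ⊆ F}

/-- A collection is locally finite if every point has a 𝒫-open neighborhood
meeting only finitely many members. -/
def SLocallyFinite (P : Set (Set X)) (A : Set (Set X)) : Prop :=
  ∀ x : X, ∃ N ∈ P, x ∈ N ∧ {a ∈ A | (a ∩ N).Nonempty}.Finite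

/-- A pairwise open cover of the bispace (X, P, Q). -/
def PairwiseOpenCover (P Q : Set (Set X)) (B : Set (Set X)) : Prop :=
  ⋃₀ B = Set.univ ∧ B ⊆ P ∪ Q ∧
  (∃ U ∈ B, U ∈ P ∧ U.Nonempty) ∧ (∃ V ∈ B, V ∈ Q ∧ V.Nonempty)

/-- B is a parallel refinement of the pairwise open cover A. -/
def ParallelRefinement (P Q : Set (Set X)) (A B : Set (Set X)) : Prop :=
  PairwiseOpenCover P Q B ∧
  (∀ U ∈ B, U ∈ P → ∃ V ∈ A, V ∈ P ∧ U ⊆ V) ∧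
  (∀ U ∈ B, U ∈ Q → ∃ V ∈ A, V ∈ Q ∧ U ⊆ V)

/-- M is 𝒫_{𝒰x}-open. -/
def PUxOpen (P Q : Set (Set X)) (U : Set (Set X)) (x : X) (M : Set X) : Prop :=
  ((∃ W ∈ U, W ∈ P ∧ x ∈ W) ∧ M ∈ P) ∨ ((∃ W ∈ U, W ∈ Q ∧ x ∈ W) ∧ M ∈ Q)

/-- B is a locally finite refinement of the pairwise open cover A. -/
def LocallyFiniteRefinement (P Q : Set (Set X)) (A B : Set (Set X)) : Prop :=
  ⋃₀ B = Set.univ ∧ (∀ b ∈ B, ∃ a ∈ A, b ⊆ a) ∧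
  ∀ x : X, ∃ N, PUxOpen P Q A x N ∧ x ∈ N ∧ {b ∈ B | (b ∩ N).Nonempty}.Finite

/-- Pairwise paracompactness: every pairwise open cover has a parallel
refinement which is a locally finite refinement of it. -/
def PairwiseParacompact (P Q : Set (Set X)) : Prop :=
  ∀ A, PairwiseOpenCover P Q A →
    ∃ B, ParallelRefinement P Q A B ∧ LocallyFiniteRefinement P Q A B

def PairwiseHausdorff (P Q : Set (Set X)) : Prop :=
  ∀ x y : X, x ≠ y → ∃ U ∈ P, ∃ V ∈ Q, x ∈ U ∧ y ∈ V ∧ U ∩ V = ∅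

def PairwiseNormal (P Q : Set (Set X)) : Prop :=
  ∀ F₁ F₂ : Set X, F₁ᶜ ∈ P → F₂ᶜ ∈ Q → F₁ ∩ F₂ = ∅ →
    ∃ G₁ ∈ P, ∃ G₂ ∈ Q, F₁ ⊆ G₂ ∧ F₂ ⊆ G₁ ∧ G₁ ∩ G₂ = ∅

/-- P is regular with respect to Q. -/
def RegularWrt (P Q : Set (Set X)) : Prop :=
  ∀ (x : X) (F : Set X), Fᶜ ∈ P → x ∉ F →
    ∃ U ∈ P, ∃ V ∈ Q, x ∈ U ∧ F ⊆ V ∧ U ∩ V = ∅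

def PairwiseRegular (P Q : Set (Set X)) : Prop :=
  RegularWrt P Q ∧ RegularWrt Q P

/-- Regularity of a single σ-space. -/
def SRegular (P : Set (Set X)) : Prop := RegularWrt P P

def StronglyPairwiseRegular (P Q : Set (Set X)) : Prop :=
  PairwiseRegular P Q ∧ SRegular P ∧ SRegular Q

/-- Half of condition C(1). -/
def CondC1Half (P Q : Set (Set X)) : Prop :=
  ∀ (FA FB : Set (Set X)), FA ⊆ P → (∀ F ∈ FB, Fᶜ ∈ Q) →
    ⋃₀ FA ⊆ ⋂₀ FB → ∃ K ∈ P, ⋃₀ FA ⊆ K ∧ K ⊆ ⋂₀ FB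

/-- Condition C(1). -/
def CondC1 (P Q : Set (Set X)) : Prop := CondC1Half P Q ∧ CondC1Half Q P

/-- Condition C(2) for a fixed i (Pi ∈ {P, Q}). -/
def CondC2Half (P Q Pi : Set (Set X)) : Prop :=
  ∀ (M : Set X) (B : Set (Set X)), B ⊆ P ∪ Q →
    (∀ b ∈ B, sCl Pi b ∩ M = ∅) →
    ∃ S ∈ Pi, M ⊆ S ∧ S ⊆ (⋃ b ∈ B, sCl Pi b)ᶜ

/-- Condition C(2). -/
def CondC2 (P Q : Set (Set X)) : Prop := CondC2Half P Q P ∧ CondC2Half P Q Q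

/-- Paracompactness of a single σ-space: every open cover has a locally
finite open refinement covering X. -/
def SParacompact (P : Set (Set X)) : Prop :=
  ∀ A ⊆ P, ⋃₀ A = Set.univ →
    ∃ B ⊆ P, ⋃₀ B = Set.univ ∧ (∀ b ∈ B, ∃ a ∈ A, b ⊆ a) ∧ SLocallyFinite P B

/-!
Shrink the cover `C` by regularity to the open cover `A` of sets whose two closures lie in a
member of `C`, and take a locally finite refinement `B` of `A`. Its members need not be open and
its local finiteness is measured by `A`-neighbourhoods, so both are repaired with C(2): each
`b ⊆ a ∈ A` is enlarged to an open `O_b ⊆ a` all of whose points have only neighbourhoods meeting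
`b`, and each `x` gets a `C`-neighbourhood `S` met only by open sets containing `x`. An `O_b`
meeting `S` then contains `x`, so `b` meets the old neighbourhood of `x`, and `{O_b}` is the
required refinement.
-/

lemma subset_sCl (Pi : Set (Set X)) (M : Set X) : M ⊆ sCl Pi M :=
  fun _ hx => mem_sInter.mpr fun _ hF => hF.2 hx

lemma sCl_subset {Pi : Set (Set X)} {M F : Set X} (hF : Fᶜ ∈ Pi) (hMF : M ⊆ F) :
    sCl Pi M ⊆ F :=
  fun _ hx => mem_sInter.mp hx F ⟨hF, hMF⟩

lemma sCl_mono {Pi : Set (Set X)} {M N : Set X} (h : M ⊆ N) : sCl Pi M ⊆ sCl Pi N :=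
  fun _ hx => mem_sInter.mpr fun F hF => mem_sInter.mp hx F ⟨hF.1, h.trans hF.2⟩

def adherence (P Q : Set (Set X)) (M : Set X) : Set X :=
  {p | ∀ O ∈ P ∪ Q, p ∈ O → (O ∩ M).Nonempty}

lemma mem_of_mem_adherence_singleton {P Q : Set (Set X)} {x p : X} {O : Set X}
    (hp : p ∈ adherence P Q {x}) (hO : O ∈ P ∪ Q) (hpO : p ∈ O) : x ∈ O :=
  inter_singleton_nonempty.mp (hp O hO hpO)

section Regularity

variable {P Q : Set (Set X)}

lemma RegularWrt.exists_mem_sCl_subset (h : RegularWrt P Q) {O : Set X} (hO : O ∈ P)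
    {z : X} (hz : z ∈ O) : ∃ U ∈ P, z ∈ U ∧ sCl Q U ⊆ O := by
  obtain ⟨U, hU, V, hV, hzU, hOV, hUV⟩ := h z Oᶜ (by simpa using hO) (not_not.mpr hz)
  refine ⟨U, hU, hzU, (sCl_subset (by simpa using hV) ?_).trans (compl_subset_comm.mp hOV)⟩
  exact subset_compl_iff_disjoint_right.mpr (disjoint_iff_inter_eq_empty.mpr hUV)

lemma StronglyPairwiseRegular.symm (h : StronglyPairwiseRegular P Q) :
    StronglyPairwiseRegular Q P :=
  ⟨⟨h.1.2, h.1.1⟩, h.2.2, h.2.1⟩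

lemma StronglyPairwiseRegular.exists_mem_sCl_union_subset (hP : IsSigmaStructure P)
    (hReg : StronglyPairwiseRegular P Q) {O : Set X} (hO : O ∈ P) {z : X} (hz : z ∈ O) :
    ∃ U ∈ P, z ∈ U ∧ sCl P U ∪ sCl Q U ⊆ O := by
  obtain ⟨U, hU, hzU, hUO⟩ := hReg.2.1.exists_mem_sCl_subset hO hz
  obtain ⟨V, hV, hzV, hVO⟩ := hReg.1.1.exists_mem_sCl_subset hO hz
  exact ⟨U ∩ V, hP.2.2.2 U hU V hV, ⟨hzU, hzV⟩,
    union_subset ((sCl_mono inter_subset_left).trans hUO)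
      ((sCl_mono inter_subset_right).trans hVO)⟩

lemma StronglyPairwiseRegular.exists_mem_union_sCl_union_subset (hP : IsSigmaStructure P)
    (hQ : IsSigmaStructure Q) (hReg : StronglyPairwiseRegular P Q) {O : Set X}
    (hO : O ∈ P ∪ Q) {z : X} (hz : z ∈ O) :
    ∃ U ∈ P ∪ Q, z ∈ U ∧ sCl P U ∪ sCl Q U ⊆ O := by
  rcases hO with hO | hO
  · obtain ⟨U, hU, hzU, hUO⟩ := hReg.exists_mem_sCl_union_subset hP hO hz
    exact ⟨U, Or.inl hU, hzU, hUO⟩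
  · obtain ⟨U, hU, hzU, hUO⟩ := hReg.symm.exists_mem_sCl_union_subset hQ hO hz
    exact ⟨U, Or.inr hU, hzU, union_comm (sCl P U) _ ▸ hUO⟩

end Regularity

def sClRefinement (P Q C : Set (Set X)) : Set (Set X) :=
  {W | W ∈ P ∪ Q ∧ ∃ c ∈ C, sCl P W ∪ sCl Q W ⊆ c}

lemma PairwiseOpenCover.sClRefinement {P Q C : Set (Set X)} (hC : PairwiseOpenCover P Q C)
    (hP : IsSigmaStructure P) (hQ : IsSigmaStructure Q) (hReg : StronglyPairwiseRegular P Q) :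
    PairwiseOpenCover P Q (sClRefinement P Q C) := by
  obtain ⟨hCcov, hCPQ, ⟨c, hcC, hcP, z, hzc⟩, ⟨d, hdC, hdQ, w, hwd⟩⟩ := hC
  refine ⟨eq_univ_of_forall fun x => ?_, fun W hW => hW.1, ?_, ?_⟩
  · obtain ⟨c, hcC, hxc⟩ := mem_sUnion.mp (hCcov.symm ▸ mem_univ x)
    obtain ⟨U, hU, hxU, hUc⟩ := hReg.exists_mem_union_sCl_union_subset hP hQ (hCPQ hcC) hxc
    exact ⟨U, ⟨hU, c, hcC, hUc⟩, hxU⟩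
  · obtain ⟨U, hU, hzU, hUc⟩ := hReg.exists_mem_sCl_union_subset hP hcP hzc
    exact ⟨U, ⟨Or.inl hU, c, hcC, hUc⟩, hU, z, hzU⟩
  · obtain ⟨U, hU, hwU, hUd⟩ := hReg.symm.exists_mem_sCl_union_subset hQ hdQ hwd
    exact ⟨U, ⟨Or.inr hU, d, hdC, union_comm (sCl P U) _ ▸ hUd⟩, hU, w, hwU⟩

/-- C(2) is applied to the family of all open sets whose `Pi`-closure misses `M`. An open set
through a point of `S` contains the `Pi`-closure of a smaller open set through that point, which
therefore cannot miss `M`. -/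
lemma CondC2Half.exists_superset_subset_adherence {P Q Pi : Set (Set X)}
    (hC2 : CondC2Half P Q Pi)
    (hshrink : ∀ O ∈ P ∪ Q, ∀ z ∈ O, ∃ U ∈ P ∪ Q, z ∈ U ∧ sCl Pi U ⊆ O) (M : Set X) :
    ∃ S ∈ Pi, M ⊆ S ∧ S ⊆ adherence P Q M := by
  obtain ⟨S, hS, hMS, hSavoid⟩ :=
    hC2 M {U | U ∈ P ∪ Q ∧ sCl Pi U ∩ M = ∅} (fun U hU => hU.1) (fun U hU => hU.2)
  refine ⟨S, hS, hMS, fun p hpS O hO hpO => ?_⟩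
  obtain ⟨U, hU, hpU, hUO⟩ := hshrink O hO p hpO
  by_contra hOM
  have hUM : sCl Pi U ∩ M = ∅ :=
    subset_empty_iff.mp fun q hq => hOM ⟨q, hUO hq.1, hq.2⟩
  exact hSavoid hpS (mem_biUnion (x := U) ⟨hU, hUM⟩ (subset_sCl Pi U hpU))

lemma CondC2.exists_superset_subset_adherence {P Q : Set (Set X)} (hC2 : CondC2 P Q)
    (hP : IsSigmaStructure P) (hQ : IsSigmaStructure Q) (hReg : StronglyPairwiseRegular P Q)
    {a : Set X} (ha : a ∈ P ∪ Q) (M : Set X) :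
    ∃ S, (a ∈ P ∧ S ∈ P ∨ a ∈ Q ∧ S ∈ Q) ∧ M ⊆ S ∧ S ⊆ adherence P Q M := by
  have hshrink (Pi : Set (Set X)) (hPi : Pi = P ∨ Pi = Q) :
      ∀ O ∈ P ∪ Q, ∀ z ∈ O, ∃ U ∈ P ∪ Q, z ∈ U ∧ sCl Pi U ⊆ O := by
    intro O hO z hz
    obtain ⟨U, hU, hzU, hUO⟩ := hReg.exists_mem_union_sCl_union_subset hP hQ hO hz
    rcases hPi with rfl | rfl
    exacts [⟨U, hU, hzU, subset_union_left.trans hUO⟩,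
      ⟨U, hU, hzU, subset_union_right.trans hUO⟩]
  rcases ha with ha | ha
  · obtain ⟨S, hS, hMS, hSM⟩ := hC2.1.exists_superset_subset_adherence (hshrink P (.inl rfl)) M
    exact ⟨S, .inl ⟨ha, hS⟩, hMS, hSM⟩
  · obtain ⟨S, hS, hMS, hSM⟩ := hC2.2.exists_superset_subset_adherence (hshrink Q (.inr rfl)) M
    exact ⟨S, .inr ⟨ha, hS⟩, hMS, hSM⟩

lemma PUxOpen.mem_union {P Q U : Set (Set X)} {x : X} {M : Set X} (h : PUxOpen P Q U x M) :
    M ∈ P ∪ Q :=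
  h.imp (·.2) (·.2)

/-- An `f b` meeting `S` contains `x`, hence `b` meets the old neighbourhood of `x`. -/
lemma LocallyFiniteRefinement.image {P Q A B C : Set (Set X)}
    (hB : LocallyFiniteRefinement P Q A B) (f : Set X → Set X)
    (hf : ∀ b ∈ B, f b ∈ P ∪ Q ∧ b ⊆ f b ∧ f b ⊆ adherence P Q b)
    (hfC : ∀ b ∈ B, ∃ c ∈ C, f b ⊆ c)
    (hnhd : ∀ x, ∃ S, PUxOpen P Q C x S ∧ x ∈ S ∧ S ⊆ adherence P Q {x}) :
    LocallyFiniteRefinement P Q C (f '' B) := by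
  obtain ⟨hBcov, -, hBfin⟩ := hB
  refine ⟨eq_univ_of_forall fun x => ?_, forall_mem_image.mpr hfC, fun x => ?_⟩
  · obtain ⟨b, hb, hxb⟩ := mem_sUnion.mp (hBcov.symm ▸ mem_univ x)
    exact ⟨f b, mem_image_of_mem f hb, (hf b hb).2.1 hxb⟩
  obtain ⟨N, hN, hxN, hNfin⟩ := hBfin x
  obtain ⟨S, hS, hxS, hSx⟩ := hnhd x
  refine ⟨S, hS, hxS, (hNfin.image f).subset ?_⟩
  rintro _ ⟨⟨b, hb, rfl⟩, p, hpf, hpS⟩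
  have hxf : x ∈ f b := mem_of_mem_adherence_singleton (hSx hpS) (hf b hb).1 hpf
  obtain ⟨q, hqN, hqb⟩ := (hf b hb).2.2 hxf N hN.mem_union hxN
  exact ⟨b, ⟨hb, q, hqb, hqN⟩, rfl⟩

theorem stmt_3 {X : Type*} (P Q : Set (Set X))
    (hP : IsSigmaStructure P) (hQ : IsSigmaStructure Q)
    (hReg : StronglyPairwiseRegular P Q) (hC2 : CondC2 P Q)
    (h : ∀ C, PairwiseOpenCover P Q C → ∃ B, LocallyFiniteRefinement P Q C B) :
    ∀ C, PairwiseOpenCover P Q C →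
      ∃ B, LocallyFiniteRefinement P Q C B ∧
        ∀ b ∈ B, ∃ c ∈ C, sCl P b ∪ sCl Q b ⊆ c := by
  intro C hC
  obtain ⟨B, hB⟩ := h _ (hC.sClRefinement hP hQ hReg)
  have henlarge : ∀ b ∈ B, ∃ O, (O ∈ P ∪ Q ∧ b ⊆ O ∧ O ⊆ adherence P Q b) ∧
      ∃ c ∈ C, sCl P O ∪ sCl Q O ⊆ c := by
    intro b hb
    obtain ⟨a, ⟨haPQ, c, hcC, hac⟩, hba⟩ := hB.2.1 b hb
    obtain ⟨S, hSa, hbS, hSb⟩ := hC2.exists_superset_subset_adherence hP hQ hReg haPQ b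
    have hSa_open : S ∩ a ∈ P ∪ Q := hSa.imp (fun haS => hP.2.2.2 S haS.2 a haS.1)
      (fun haS => hQ.2.2.2 S haS.2 a haS.1)
    exact ⟨S ∩ a, ⟨hSa_open, subset_inter hbS hba, inter_subset_left.trans hSb⟩, c, hcC,
      union_subset_union (sCl_mono inter_subset_right) (sCl_mono inter_subset_right) |>.trans hac⟩
  choose! f hf hfC using henlarge
  refine ⟨f '' B, hB.image f hf (fun b hb => ?_) (fun x => ?_), forall_mem_image.mpr hfC⟩
  · obtain ⟨c, hcC, hc⟩ := hfC b hb
    exact ⟨c, hcC, (subset_sCl P (f b)).trans (subset_union_left.trans hc)⟩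
  · obtain ⟨c, hcC, hxc⟩ := mem_sUnion.mp (hC.1.symm ▸ mem_univ x)
    obtain ⟨S, hcS, hxS, hSx⟩ :=
      hC2.exists_superset_subset_adherence hP hQ hReg (hC.2.1 hcC) {x}
    exact ⟨S, hcS.imp (fun hcS => ⟨⟨c, hcC, hcS.1, hxc⟩, hcS.2⟩)
      (fun hcS => ⟨⟨c, hcC, hcS.1, hxc⟩, hcS.2⟩),
      hxS rfl, hSx⟩
end

section
/- Let X = ℝ. Let τ₁ be the collection of all sets A ⊆ ℝ such that either (0,1) ⊆ ℝ \ A or A ∩ (0,1) is a union of open subintervals of (0,1); let τ₂ be the collection of all countable subsets of (0,1); let τ be the collection of all countable unions of members of τ₁ ∪ τ₂; and let σ be the usual (Euclidean) topology on ℝ. Then the bispace (ℝ, τ, σ) is strongly pairwise regular. -/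
open Set

variable {X : Type*}

/-- τ₁ of Example 3.1: sets A such that either (0,1) ⊆ ℝ \ A or
A ∩ (0,1) is a union of open subintervals of (0,1). -/
def exTau1 : Set (Set ℝ) :=
  {A | Set.Ioo (0:ℝ) 1 ⊆ Aᶜ ∨
    ∃ I : Set (Set ℝ),
      (∀ J ∈ I, ∃ a b : ℝ, J = Set.Ioo a b ∧ Set.Ioo a b ⊆ Set.Ioo (0:ℝ) 1) ∧
      A ∩ Set.Ioo (0:ℝ) 1 = ⋃₀ I}

/-- τ₂ of Example 3.1: all countable subsets of (0,1). -/
def exTau2 : Set (Set ℝ) :=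
  {A | A.Countable ∧ A ⊆ Set.Ioo (0:ℝ) 1}

/-- τ of Example 3.1: all countable unions of members of τ₁ ∪ τ₂. -/
def exTau : Set (Set ℝ) :=
  {A | ∃ f : ℕ → Set ℝ, (∀ n, f n ∈ exTau1 ∪ exTau2) ∧ A = ⋃ n, f n}

/-! The τ-open sets include every Euclidean open set and every singleton, so a point `x` is
τ-separated from any set avoiding it by the τ-open `{x}` and the open `{x}ᶜ`; the Euclidean
side is ordinary regularity of ℝ, whose open sets are all τ-open. -/

lemma regularWrt_of_singleton_mem {P Q : Set (Set X)} (hP : ∀ x, {x} ∈ P)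
    (hQ : ∀ x, {x}ᶜ ∈ Q) : RegularWrt P Q :=
  fun x _ _ hxF => ⟨{x}, hP x, {x}ᶜ, hQ x, rfl, subset_compl_singleton_iff.mpr hxF,
    inter_compl_self _⟩

lemma regularWrt_isOpen [TopologicalSpace X] [RegularSpace X] {P : Set (Set X)}
    (hP : ∀ A, IsOpen A → A ∈ P) : RegularWrt {A | IsOpen A} P := by
  intro x F hF hxF
  obtain ⟨t, ht, htc, htF⟩ := exists_mem_nhds_isClosed_subset (hF.mem_nhds hxF)
  exact ⟨interior t, isOpen_interior, tᶜ, hP _ htc.isOpen_compl,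
    mem_interior_iff_mem_nhds.mpr ht, subset_compl_comm.mp htF, disjoint_iff_inter_eq_empty.mp
      (disjoint_compl_right.mono_left interior_subset)⟩

lemma mem_exTau1_of_isOpen_inter {A : Set ℝ} (h : IsOpen (A ∩ Ioo 0 1)) : A ∈ exTau1 := by
  refine Or.inr ⟨{J | ∃ a b : ℝ, J = Ioo a b ∧ Ioo a b ⊆ A ∩ Ioo 0 1}, ?_, ?_⟩
  · rintro J ⟨a, b, rfl, hsub⟩
    exact ⟨a, b, rfl, hsub.trans inter_subset_right⟩
  · refine subset_antisymm (fun x hx => ?_) ?_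
    · obtain ⟨l, u, hlu, hsub⟩ := mem_nhds_iff_exists_Ioo_subset.mp (h.mem_nhds hx)
      exact ⟨Ioo l u, ⟨l, u, rfl, hsub⟩, hlu⟩
    · rintro x ⟨J, ⟨a, b, rfl, hsub⟩, hx⟩
      exact hsub hx

lemma mem_exTau_of_mem_union {A : Set ℝ} (h : A ∈ exTau1 ∪ exTau2) : A ∈ exTau :=
  ⟨fun _ => A, fun _ => h, (iUnion_const A).symm⟩

lemma mem_exTau_of_isOpen {A : Set ℝ} (h : IsOpen A) : A ∈ exTau :=
  mem_exTau_of_mem_union (Or.inl (mem_exTau1_of_isOpen_inter (h.inter isOpen_Ioo)))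

lemma singleton_mem_exTau (x : ℝ) : {x} ∈ exTau := by
  by_cases hx : x ∈ Ioo (0 : ℝ) 1
  · exact mem_exTau_of_mem_union (Or.inr ⟨countable_singleton x, singleton_subset_iff.mpr hx⟩)
  · exact mem_exTau_of_mem_union (Or.inl (Or.inl fun y hy (hyx : y = x) => hx (hyx ▸ hy)))

theorem stmt_15 :
    StronglyPairwiseRegular exTau {A : Set ℝ | IsOpen A} :=
  ⟨⟨regularWrt_of_singleton_mem singleton_mem_exTau
        fun x => show IsOpen {x}ᶜ from isOpen_compl_singleton,
      regularWrt_isOpen fun _ => mem_exTau_of_isOpen⟩,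
    regularWrt_of_singleton_mem singleton_mem_exTau
      fun _ => mem_exTau_of_isOpen isOpen_compl_singleton,
    regularWrt_isOpen fun _ => id⟩
end
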